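/- The modal logic K5 = K ⊕ (◇□p→□p) has the finite model property: every formula not in K5 is falsified in a finite Kripke model based on a Euclidean frame. -/

import Mathlib

/-!
The canonical model of K5 is Euclidean: by the 5 axiom, a formula □ψ that fails at Γ makes
¬□ψ necessary at Γ, so no successor of Γ can satisfy □ψ. Hence every non-theorem fails in a
Euclidean model. In a Euclidean model, any two worlds reachable from a world w₀ see each other.
Keeping w₀ as a root and identifying the reachable worlds that agree on the subformulas of φ
therefore gives a finite Euclidean model that preserves the truth of every subformula of φ.
-/

/-- Modal formulas with ◇ primitive. -/
inductive F : Type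
  | var : Nat → F
  | neg : F → F
  | imp : F → F → F
  | dia : F → F
deriving DecidableEq

/-- □φ is defined as ¬◇¬φ. -/
def F.box (φ : F) : F := .neg (.dia (.neg φ))

/-- Kripke models. -/
structure Model where
  W : Type
  R : W → W → Prop
  V : Nat → W → Prop

/-- Standard Kripke satisfaction. -/
def Model.sat (M : Model) : M.W → F → Prop
  | w, .var n => M.V n w
  | w, .neg φ => ¬ M.sat w φ
  | w, .imp φ ψ => M.sat w φ → M.sat w ψ
  | w, .dia φ => ∃ u, M.R w u ∧ M.sat u φ

/-- φ ↔ ψ defined via ¬ and →. -/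
def F.iff' (φ ψ : F) : F := .neg ((φ.imp ψ).imp (.neg (ψ.imp φ)))

/-- Propositional evaluation treating ◇-formulas as atoms. -/
def evalP (v : F → Prop) : F → Prop
  | .var n => v (.var n)
  | .neg φ => ¬ evalP v φ
  | .imp φ ψ => evalP v φ → evalP v ψ
  | .dia φ => v (.dia φ)

/-- Instances of classical propositional tautologies. -/
def TautInst (φ : F) : Prop := ∀ v : F → Prop, evalP v φ

/-- Provability in K5 = K ⊕ (◇□p → □p): propositional tautologies, K, dual, the 5 axiom,
modus ponens and necessitation. -/
inductive ProvK5 : F → Prop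
  | taut {φ} : TautInst φ → ProvK5 φ
  | axK (φ ψ) : ProvK5 ((F.box (φ.imp ψ)).imp ((F.box φ).imp (F.box ψ)))
  | axDual (φ) : ProvK5 ((F.dia φ).iff' (F.neg (F.box (F.neg φ))))
  | ax5 (φ) : ProvK5 ((F.dia (F.box φ)).imp (F.box φ))
  | mp {φ ψ} : ProvK5 (φ.imp ψ) → ProvK5 φ → ProvK5 ψ
  | nec {φ} : ProvK5 φ → ProvK5 (F.box φ)

/-- A relation is Euclidean if wRu and wRv imply uRv. -/
def Euclidean {W : Type} (R : W → W → Prop) : Prop :=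
  ∀ w u v : W, R w u → R w v → R u v

open Relation

namespace F

def top : F := (var 0).imp (var 0)

def conj : List F → F
  | [] => top
  | φ :: l => neg (φ.imp (neg (conj l)))

def subformulas : F → Finset F
  | var n => {var n}
  | neg φ => insert (neg φ) φ.subformulas
  | imp φ ψ => insert (imp φ ψ) (φ.subformulas ∪ ψ.subformulas)
  | dia φ => insert (dia φ) φ.subformulas

theorem mem_subformulas_self (φ : F) : φ ∈ φ.subformulas := by
  cases φ <;> simp [subformulas]

end F

@[simp]
theorem evalP_conj (v : F → Prop) : ∀ l : List F, evalP v (F.conj l) ↔ ∀ ψ ∈ l, evalP v ψ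
  | [] => by simp [F.conj, F.top, evalP]
  | φ :: l => by simp [F.conj, evalP, evalP_conj v l]

namespace ProvK5

theorem of_taut_imp {φ ψ : F} (h : ProvK5 φ) (t : ∀ v, evalP v φ → evalP v ψ) : ProvK5 ψ :=
  mp (taut t) h

theorem of_taut_imp₂ {φ ψ χ : F} (hφ : ProvK5 φ) (hψ : ProvK5 ψ)
    (t : ∀ v, evalP v φ → evalP v ψ → evalP v χ) : ProvK5 χ :=
  mp (mp (taut t) hφ) hψ

theorem box_mono {φ ψ : F} (h : ProvK5 (φ.imp ψ)) : ProvK5 (φ.box.imp ψ.box) :=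
  mp (axK φ ψ) (nec h)

theorem conj_map_box_imp_box_conj :
    ∀ l : List F, ProvK5 ((F.conj (l.map F.box)).imp (F.conj l).box)
  | [] => of_taut_imp (nec (taut fun v => by simp)) fun v h _ => h
  | φ :: l => by
      have hφ : ProvK5 (φ.box.imp ((F.conj l).imp (F.conj (φ :: l))).box) :=
        box_mono (taut fun v => by simp only [evalP, evalP_conj, List.forall_mem_cons]; tauto)
      have hφl : ProvK5 (φ.box.imp ((F.conj l).box.imp (F.conj (φ :: l)).box)) :=
        of_taut_imp₂ hφ (axK _ _) fun v => by simp only [evalP]; tauto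
      exact of_taut_imp₂ hφl (conj_map_box_imp_box_conj l) fun v => by
        simp only [evalP, evalP_conj, List.map_cons, List.forall_mem_cons]; tauto

end ProvK5

def Consistent (Γ : Set F) : Prop :=
  ∀ l : List F, (∀ ψ ∈ l, ψ ∈ Γ) → ¬ ProvK5 (F.conj l).neg

theorem consistent_singleton_neg {φ : F} (h : ¬ ProvK5 φ) : Consistent {φ.neg} := by
  intro l hl hp
  refine h (hp.of_taut_imp fun v hl' => by_contra fun hφ => hl' ?_)
  simp only [evalP_conj]
  intro ψ hψ
  obtain rfl : ψ = φ.neg := hl ψ hψ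
  exact hφ

theorem exists_conj_imp_neg_of_not_consistent_insert {Γ : Set F} {ψ : F}
    (h : ¬ Consistent (insert ψ Γ)) :
    ∃ l : List F, (∀ χ ∈ l, χ ∈ Γ) ∧ ProvK5 ((F.conj l).imp ψ.neg) := by
  simp only [Consistent, not_forall, not_not] at h
  obtain ⟨l, hl, hp⟩ := h
  refine ⟨l.filter (· ≠ ψ), fun χ hχ => ?_, hp.of_taut_imp fun v hl' hfilter hψ => hl' ?_⟩
  · rw [List.mem_filter, decide_eq_true_iff] at hχ
    exact (hl χ hχ.1).resolve_left hχ.2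
  · rw [evalP_conj] at hfilter ⊢
    intro χ hχ
    by_cases hχψ : χ = ψ
    · exact hχψ ▸ hψ
    · exact hfilter χ (List.mem_filter.2 ⟨hχ, decide_eq_true hχψ⟩)

theorem Consistent.sUnion {c : Set (Set F)} (hc : IsChain (· ⊆ ·) c) (hne : c.Nonempty)
    (hcon : ∀ Γ ∈ c, Consistent Γ) : Consistent (⋃₀ c) := by
  intro l hl
  obtain ⟨Γ, hΓ, hlΓ⟩ :=
    hc.directedOn.exists_mem_subset_of_finite_of_subset_sUnion hne l.finite_toSet hl
  exact hcon Γ hΓ l hlΓ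

structure MaximalConsistent (Γ : Set F) : Prop where
  consistent : Consistent Γ
  mem_or_neg_mem : ∀ ψ : F, ψ ∈ Γ ∨ ψ.neg ∈ Γ

theorem Consistent.exists_maximalConsistent_superset {Γ : Set F} (h : Consistent Γ) :
    ∃ Δ, Γ ⊆ Δ ∧ MaximalConsistent Δ := by
  obtain ⟨Δ, hΓΔ, hmax⟩ := zorn_subset_nonempty {Δ | Consistent Δ}
    (fun c hc hchain hne => ⟨_, Consistent.sUnion hchain hne hc, fun _ => Set.subset_sUnion_of_mem⟩)
    Γ h
  have hinsert : ∀ χ, χ ∉ Δ → ¬ Consistent (insert χ Δ) := fun χ hχ hcon =>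
    hχ (hmax.2 hcon (Set.subset_insert χ Δ) (Set.mem_insert χ Δ))
  refine ⟨Δ, hΓΔ, hmax.prop, fun ψ => ?_⟩
  by_contra! hψ
  obtain ⟨l₁, hl₁, hp₁⟩ := exists_conj_imp_neg_of_not_consistent_insert (hinsert _ hψ.1)
  obtain ⟨l₂, hl₂, hp₂⟩ := exists_conj_imp_neg_of_not_consistent_insert (hinsert _ hψ.2)
  refine hmax.prop (l₁ ++ l₂) (List.forall_mem_append.2 ⟨hl₁, hl₂⟩) (hp₁.of_taut_imp₂ hp₂ ?_)
  intro v
  simp only [evalP, evalP_conj, List.forall_mem_append]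
  tauto

namespace MaximalConsistent

variable {Γ : Set F}

theorem mem_of_prov_conj_imp (h : MaximalConsistent Γ) {l : List F} {χ : F}
    (hl : ∀ ψ ∈ l, ψ ∈ Γ) (hp : ProvK5 ((F.conj l).imp χ)) : χ ∈ Γ := by
  refine (h.mem_or_neg_mem χ).resolve_right fun hχ => h.consistent (χ.neg :: l)
    (List.forall_mem_cons.2 ⟨hχ, hl⟩) (hp.of_taut_imp fun v => ?_)
  simp only [evalP, evalP_conj, List.forall_mem_cons]
  tauto

theorem mem_of_taut (h : MaximalConsistent Γ) {l : List F} {χ : F} (hl : ∀ ψ ∈ l, ψ ∈ Γ)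
    (t : ∀ v, (∀ ψ ∈ l, evalP v ψ) → evalP v χ) : χ ∈ Γ :=
  h.mem_of_prov_conj_imp hl (ProvK5.taut fun v hv => t v ((evalP_conj v l).1 hv))

theorem mem_of_prov (h : MaximalConsistent Γ) {χ : F} (hp : ProvK5 χ) : χ ∈ Γ :=
  h.mem_of_prov_conj_imp (l := []) (by simp) (hp.of_taut_imp fun _ hχ _ => hχ)

theorem neg_mem_iff (h : MaximalConsistent Γ) {ψ : F} : ψ.neg ∈ Γ ↔ ψ ∉ Γ :=
  ⟨fun hn hψ => h.consistent [ψ, ψ.neg] (by simp [hψ, hn]) (ProvK5.taut fun v => by simp [evalP]),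
    (h.mem_or_neg_mem ψ).resolve_left⟩

theorem imp_mem_iff (h : MaximalConsistent Γ) {φ ψ : F} : φ.imp ψ ∈ Γ ↔ (φ ∈ Γ → ψ ∈ Γ) := by
  refine ⟨fun hφψ hφ => h.mem_of_taut (l := [φ.imp ψ, φ]) (by simp [hφψ, hφ])
    fun v => by simp [evalP], fun hφψ => ?_⟩
  by_cases hφ : φ ∈ Γ
  · exact h.mem_of_taut (l := [ψ]) (by simp [hφψ hφ]) fun v => by simp [evalP]; tauto
  · exact h.mem_of_taut (l := [φ.neg]) (by simp [h.neg_mem_iff.2 hφ]) fun v => by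
      simp [evalP]; tauto

theorem dia_mem_iff (h : MaximalConsistent Γ) {ψ : F} : ψ.dia ∈ Γ ↔ ψ.neg.box ∉ Γ := by
  have hdual := h.mem_of_prov (ProvK5.axDual ψ)
  rw [← h.neg_mem_iff]
  constructor <;> intro hψ
  · exact h.mem_of_taut (l := [ψ.dia.iff' ψ.neg.box.neg, ψ.dia]) (by simp [hdual, hψ])
      fun v => by simp [F.iff', evalP]; tauto
  · exact h.mem_of_taut (l := [ψ.dia.iff' ψ.neg.box.neg, ψ.neg.box.neg]) (by simp [hdual, hψ])
      fun v => by simp [F.iff', evalP]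

theorem exists_of_dia_mem (h : MaximalConsistent Γ) {ψ : F} (hψ : ψ.dia ∈ Γ) :
    ∃ Δ, MaximalConsistent Δ ∧ ψ ∈ Δ ∧ ∀ χ, χ.box ∈ Γ → χ ∈ Δ := by
  have hcon : Consistent (insert ψ {χ | χ.box ∈ Γ}) := by
    by_contra hincon
    obtain ⟨l, hl, hp⟩ := exists_conj_imp_neg_of_not_consistent_insert hincon
    refine h.dia_mem_iff.1 hψ (h.mem_of_prov_conj_imp (l := l.map F.box) (by simpa using hl) ?_)
    exact (ProvK5.conj_map_box_imp_box_conj l).of_taut_imp₂ (ProvK5.box_mono hp)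
      fun v => by simp only [evalP]; tauto
  obtain ⟨Δ, hsub, hΔ⟩ := hcon.exists_maximalConsistent_superset
  exact ⟨Δ, hΔ, hsub (Set.mem_insert _ _), fun χ hχ => hsub (Set.mem_insert_of_mem _ hχ)⟩

end MaximalConsistent

def canonicalModel : Model where
  W := {Γ : Set F // MaximalConsistent Γ}
  R Γ Δ := ∀ ψ, ψ.box ∈ Γ.1 → ψ ∈ Δ.1
  V n Γ := F.var n ∈ Γ.1

theorem canonicalModel_sat_iff (ψ : F) (Γ : canonicalModel.W) :
    canonicalModel.sat Γ ψ ↔ ψ ∈ Γ.1 := by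
  induction ψ generalizing Γ with
  | var n => exact Iff.rfl
  | neg ψ ih => exact (not_congr (ih Γ)).trans Γ.2.neg_mem_iff.symm
  | imp φ ψ ihφ ihψ => exact (imp_congr (ihφ Γ) (ihψ Γ)).trans Γ.2.imp_mem_iff.symm
  | dia ψ ih =>
    rw [Γ.2.dia_mem_iff]
    constructor
    · rintro ⟨Δ, hΓΔ, hψ⟩ hbox
      exact Δ.2.neg_mem_iff.1 (hΓΔ _ hbox) ((ih Δ).1 hψ)
    · intro hbox
      obtain ⟨Δ, hΔ, hψ, hΓΔ⟩ := Γ.2.exists_of_dia_mem (Γ.2.dia_mem_iff.2 hbox)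
      exact ⟨⟨Δ, hΔ⟩, hΓΔ, (ih _).2 hψ⟩

theorem euclidean_canonicalModel : Euclidean canonicalModel.R := by
  intro Γ Δ Θ hΓΔ hΓΘ ψ hψ
  refine hΓΘ ψ (by_contra fun hbox => ?_)
  have hdia : ψ.box.dia ∉ Γ.1 := fun hdia =>
    hbox (Γ.2.imp_mem_iff.1 (Γ.2.mem_of_prov (ProvK5.ax5 ψ)) hdia)
  exact Δ.2.neg_mem_iff.1 (hΓΔ _ (not_not.1 (mt Γ.2.dia_mem_iff.2 hdia))) hψ

theorem exists_not_sat_canonicalModel {φ : F} (h : ¬ ProvK5 φ) :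
    ∃ Γ : canonicalModel.W, ¬ canonicalModel.sat Γ φ := by
  obtain ⟨Γ, hsub, hΓ⟩ := (consistent_singleton_neg h).exists_maximalConsistent_superset
  exact ⟨⟨Γ, hΓ⟩, (canonicalModel_sat_iff φ _).not.2 (hΓ.neg_mem_iff.1 (hsub rfl))⟩

theorem Euclidean.rel_of_transGen {W : Type} {R : W → W → Prop} (hE : Euclidean R)
    {w u v : W} (hu : TransGen R w u) (hv : TransGen R w v) : R u v := by
  have hsucc : ∀ x, R w x → R u x := by
    induction hu with
    | single hwu => exact fun x hwx => hE _ _ _ hwu hwx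
    | tail _ hbc ih => exact fun x hwx => hE _ _ _ hbc (ih x hwx)
  have hrefl : R u u := by
    obtain ⟨x, -, hxu⟩ := TransGen.tail'_iff.1 hu
    exact hE x u u hxu hxu
  induction hv with
  | single hwv => exact hsucc _ hwv
  | tail _ hbc ih => exact hE _ _ _ (hE _ _ _ ih hrefl) hbc

namespace Model

def typeIn (M : Model) (Φ : Finset F) (u : M.W) : Φ → Prop := fun ψ => M.sat u ψ

/-- The root `none` stands for `w₀`, and `some g` for the worlds reachable from `w₀` whose
type on `Φ` is `g`. -/
def collapse (M : Model) (w₀ : M.W) (Φ : Finset F) : Model where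
  W := Option (Φ → Prop)
  R
    | none, some g => ∃ u, M.R w₀ u ∧ M.typeIn Φ u = g
    | some _, some g => ∃ u, TransGen M.R w₀ u ∧ M.typeIn Φ u = g
    | _, none => False
  V
    | n, none => M.V n w₀
    | n, some g => ∃ h : F.var n ∈ Φ, g ⟨_, h⟩

theorem euclidean_collapse (M : Model) (w₀ : M.W) (Φ : Finset F) :
    Euclidean (M.collapse w₀ Φ).R := by
  rintro (_ | _) (_ | _) (_ | _) hu hv <;> try contradiction
  · obtain ⟨x, hx, hg⟩ := hv
    exact ⟨x, .single hx, hg⟩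
  · exact hv

variable {M : Model} {w₀ : M.W} {Φ : Finset F}

theorem sat_collapse_some (hE : Euclidean M.R) {ψ : F} (hψ : ψ.subformulas ⊆ Φ) {u : M.W}
    (hu : TransGen M.R w₀ u) : (M.collapse w₀ Φ).sat (some (M.typeIn Φ u)) ψ ↔ M.sat u ψ := by
  induction ψ generalizing u with
  | var n => exact ⟨fun ⟨_, h⟩ => h, fun h => ⟨hψ (F.mem_subformulas_self _), h⟩⟩
  | neg ψ ih =>
    rw [F.subformulas, Finset.insert_subset_iff] at hψ
    exact not_congr (ih hψ.2 hu)
  | imp φ ψ ihφ ihψ =>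
    rw [F.subformulas, Finset.insert_subset_iff, Finset.union_subset_iff] at hψ
    exact imp_congr (ihφ hψ.2.1 hu) (ihψ hψ.2.2 hu)
  | dia ψ ih =>
    rw [F.subformulas, Finset.insert_subset_iff] at hψ
    constructor
    · rintro ⟨_ | g, hR, hsat⟩
      · exact hR.elim
      · obtain ⟨x, hx, rfl⟩ := hR
        exact ⟨x, hE.rel_of_transGen hu hx, (ih hψ.2 hx).1 hsat⟩
    · rintro ⟨x, hux, hsat⟩
      exact ⟨some (M.typeIn Φ x), ⟨x, hu.tail hux, rfl⟩, (ih hψ.2 (hu.tail hux)).2 hsat⟩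

theorem sat_collapse_none (hE : Euclidean M.R) {ψ : F} (hψ : ψ.subformulas ⊆ Φ) :
    (M.collapse w₀ Φ).sat none ψ ↔ M.sat w₀ ψ := by
  induction ψ with
  | var n => exact Iff.rfl
  | neg ψ ih =>
    rw [F.subformulas, Finset.insert_subset_iff] at hψ
    exact not_congr (ih hψ.2)
  | imp φ ψ ihφ ihψ =>
    rw [F.subformulas, Finset.insert_subset_iff, Finset.union_subset_iff] at hψ
    exact imp_congr (ihφ hψ.2.1) (ihψ hψ.2.2)
  | dia ψ =>
    rw [F.subformulas, Finset.insert_subset_iff] at hψ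
    constructor
    · rintro ⟨_ | g, hR, hsat⟩
      · exact hR.elim
      · obtain ⟨x, hx, rfl⟩ := hR
        exact ⟨x, hx, (sat_collapse_some hE hψ.2 (.single hx)).1 hsat⟩
    · rintro ⟨x, hx, hsat⟩
      exact ⟨some (M.typeIn Φ x), ⟨x, hx, rfl⟩, (sat_collapse_some hE hψ.2 (.single hx)).2 hsat⟩

theorem exists_finite_euclidean_not_sat (hE : Euclidean M.R) {φ : F} (h : ¬ M.sat w₀ φ) :
    ∃ M' : Model, Euclidean M'.R ∧ Finite M'.W ∧ ∃ w : M'.W, ¬ M'.sat w φ :=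
  ⟨M.collapse w₀ φ.subformulas, M.euclidean_collapse w₀ _, inferInstanceAs (Finite (Option _)),
    none, (sat_collapse_none hE subset_rfl).not.2 h⟩

end Model

/-- K5 has the finite model property: every formula not provable in K5 is falsified in a
finite Kripke model based on a Euclidean frame. -/
theorem K5_fmp (φ : F) (h : ¬ ProvK5 φ) :
    ∃ M : Model, Euclidean M.R ∧ Finite M.W ∧ ∃ w : M.W, ¬ M.sat w φ := by
  obtain ⟨Γ, hΓ⟩ := exists_not_sat_canonicalModel h
  exact Model.exists_finite_euclidean_not_sat euclidean_canonicalModel hΓ
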